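/- Let m > 0 be an integer and p a prime. Then the sum of the binomial coefficients C(m, k), taken over all k with 1 ≤ k ≤ m − 1 and (p − 1) ∣ k, is divisible by p. -/

import Mathlib

/-!
Over a finite field `K` with `q` elements, `∑ x, x ^ k` is `-1` when `k ≠ 0` and `q - 1 ∣ k`,
and `0` otherwise. Expanding both sides of `∑ x, (x + 1) ^ m = ∑ x, x ^ m` with this rule,
the left side is minus the sum of `m.choose k` over `0 < k ≤ m` with `q - 1 ∣ k`, and the right
side is exactly its `k = m` term; the terms with `0 < k < m` therefore sum to `0` in `K`.
Take `K = ZMod p`.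
-/

open Finset

theorem Finset.sum_add_one_pow {R : Type*} [CommSemiring R] (s : Finset R) (m : ℕ) :
    ∑ x ∈ s, (x + 1) ^ m = ∑ k ∈ range (m + 1), (m.choose k : R) * ∑ x ∈ s, x ^ k := by
  simp_rw [add_pow, one_pow, mul_one, Finset.sum_comm (s := s), Finset.mul_sum, mul_comm]

namespace FiniteField

variable {K : Type*} [Field K] [Fintype K]

theorem sum_pow_eq_ite (k : ℕ) :
    ∑ x : K, x ^ k = if k ≠ 0 ∧ Fintype.card K - 1 ∣ k then -1 else 0 := by
  classical
  rcases eq_or_ne k 0 with rfl | hk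
  · simp
  calc ∑ x : K, x ^ k = ∑ x : {a : K // a ≠ 0}, (x : K) ^ k := by
        rw [← sum_filter_ne_zero, sum_subtype]
        simp [hk]
    _ = ∑ x : Kˣ, (x : K) ^ k := (Fintype.sum_equiv unitsEquivNeZero _ _ fun _ => rfl).symm
    _ = _ := by simp [sum_pow_units, hk]

theorem sum_choose_filter_card_sub_one_dvd_eq_zero (m : ℕ) :
    ∑ k ∈ (Ico 1 m).filter (fun k => Fintype.card K - 1 ∣ k), (m.choose k : K) = 0 := by
  have htranslate : ∑ x : K, (x + 1) ^ m = ∑ x : K, x ^ m :=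
    Fintype.sum_equiv (Equiv.addRight 1) _ _ fun _ => rfl
  rw [sum_add_one_pow, sum_range_succ, Nat.choose_self, Nat.cast_one, one_mul,
    add_eq_right] at htranslate
  simp only [sum_pow_eq_ite, mul_ite, mul_neg_one, mul_zero, ← sum_filter, sum_neg_distrib,
    neg_eq_zero] at htranslate
  convert htranslate using 2
  ext k
  simp only [mem_filter, mem_Ico, mem_range]
  omega

end FiniteField

theorem hermite_bachmann_general (m p : ℕ) (hp : p.Prime) :
    p ∣ ∑ k ∈ (Finset.Ico 1 m).filter (fun k => (p - 1) ∣ k), m.choose k := by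
  have : Fact p.Prime := ⟨hp⟩
  rw [← ZMod.natCast_eq_zero_iff, Nat.cast_sum]
  simpa [ZMod.card] using FiniteField.sum_choose_filter_card_sub_one_dvd_eq_zero (K := ZMod p) m

theorem hermite_bachmann (m p : ℕ) (hm : 0 < m) (hp : p.Prime) :
    p ∣ ∑ k ∈ (Finset.Ico 1 m).filter (fun k => (p - 1) ∣ k), m.choose k :=
  hermite_bachmann_general m p hp
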